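/- Let u ∈ {0,1}^{M+N} be admissible with λ(u) = 0. Extend u to a periodic infinite sequence ũ of period M+N. Then ũ is both M-periodic and N-periodic, and hence p-periodic for some p dividing gcd(M,N). -/

import Mathlib

/-- `Δ ⊆ ℕ` is `(M,N)`-invariant: `Δ + M ⊆ Δ`, `Δ + N ⊆ Δ`, and cofinite. -/
def MNInvariant (M N : ℕ) (Δ : Set ℕ) : Prop :=
  (∀ k ∈ Δ, k + M ∈ Δ) ∧ (∀ k ∈ Δ, k + N ∈ Δ) ∧ (Δᶜ).Finite

/-- `u` is admissible if it is the restriction to `[0, M+N-1]` of the indicator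
function of some `(M,N)`-invariant subset. -/
def Admissible (M N : ℕ) (u : ℕ → ℕ) : Prop :=
  ∃ Δ : Set ℕ, MNInvariant M N Δ ∧ ∀ i < M + N, (i ∈ Δ ↔ u i = 1)

/-- The `(M+N)`-periodic extension `ũ : ℤ → ℕ` of `u`. -/
def utilde (M N : ℕ) (u : ℕ → ℕ) (i : ℤ) : ℕ := u ((i % ((M : ℤ) + N)).toNat)

/-!
Admissibility makes `u` monotone along shifts: `u i ≤ u (i + N)` for `i < M` and
`u j ≤ u (j + M)` for `j < N`. So `λ(u)` is a sum of nonnegative terms, and since `λ` is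
symmetric in `M` and `N` (both equal `∑_{<M+N} u - ∑_{<M} u - ∑_{<N} u`), `λ(u) = 0` forces
`u (i + N) = u i` for `i < M` and `u (j + M) = u j` for `j < N`. On residues mod `M + N`,
adding `N` sends `r < M` to `r + N` and `r ≥ M` to `r - M`, so these identities are exactly the
`N`-periodicity of `ũ`; `M`-periodicity follows by symmetry and `gcd(M, N)`-periodicity by Bézout.
-/

open Finset Function

theorem Function.Periodic.natCast_gcd {R α : Type*} [Ring R] {f : R → α} {m n : ℕ}
    (hm : Periodic f m) (hn : Periodic f n) : Periodic f (Nat.gcd m n) := by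
  have hgcd : ((Nat.gcd m n : ℤ) : R) = (Nat.gcdA m n : R) * m + (Nat.gcdB m n : R) * n := by
    rw [Nat.gcd_eq_gcd_ab]
    push_cast
    rw [(Nat.cast_commute m _).eq, (Nat.cast_commute n _).eq]
  rw [← Int.cast_natCast, hgcd]
  exact (hm.int_mul _).add_period (hn.int_mul _)

theorem sum_range_shift_sub_comm {G : Type*} [AddCommGroup G] (f : ℕ → G) (M N : ℕ) :
    ∑ i ∈ range M, (f (i + N) - f i) = ∑ i ∈ range N, (f (i + M) - f i) := by
  have hMN := sum_range_add f M N
  have hNM := sum_range_add f N M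
  rw [add_comm N M] at hNM
  simp only [sum_sub_distrib, add_comm _ N, add_comm _ M]
  rw [eq_sub_of_add_eq' hMN.symm, eq_sub_of_add_eq' hNM.symm]
  abel

theorem eq_of_le_of_sum_sub_eq_zero {ι : Type*} {s : Finset ι} {a b : ι → ℕ}
    (hle : ∀ i ∈ s, a i ≤ b i) (hsum : ∑ i ∈ s, ((b i : ℤ) - a i) = 0) :
    ∀ i ∈ s, b i = a i := by
  intro i hi
  have hnonneg : ∀ j ∈ s, (0 : ℤ) ≤ b j - a j := fun j hj =>
    sub_nonneg.2 (Int.ofNat_le.2 (hle j hj))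
  have := (sum_eq_zero_iff_of_nonneg hnonneg).1 hsum i hi
  omega

section indicator

variable {Δ : Set ℕ} {M N L : ℕ} {u : ℕ → ℕ}

theorem apply_le_apply_add_of_indicator (hΔ : ∀ k ∈ Δ, k + N ∈ Δ)
    (hbin : ∀ i < L, u i ≤ 1) (hind : ∀ i < L, (i ∈ Δ ↔ u i = 1)) {i : ℕ}
    (hi : i + N < L) :
    u i ≤ u (i + N) := by
  rcases Nat.le_one_iff_eq_zero_or_eq_one.1 (hbin i (by omega)) with h | h
  · simp [h]
  · rw [h, (hind _ hi).1 (hΔ i ((hind i (by omega)).2 h))]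

theorem apply_add_eq_of_indicator_of_sum_sub_eq_zero (hΔ : ∀ k ∈ Δ, k + N ∈ Δ)
    (hbin : ∀ i < L, u i ≤ 1) (hind : ∀ i < L, (i ∈ Δ ↔ u i = 1)) (hL : M + N ≤ L)
    (hsum : ∑ i ∈ range M, ((u (i + N) : ℤ) - u i) = 0) : ∀ i < M, u (i + N) = u i := by
  have hle : ∀ i ∈ range M, u i ≤ u (i + N) := fun i hi =>
    apply_le_apply_add_of_indicator hΔ hbin hind (by have := mem_range.1 hi; omega)
  exact fun i hi => eq_of_le_of_sum_sub_eq_zero hle hsum i (mem_range.2 hi)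

end indicator

section utilde

variable {M N : ℕ} {u : ℕ → ℕ}

theorem utilde_periodic : Periodic (utilde M N u) (M + N : ℕ) := by
  intro i
  simp [utilde]

theorem utilde_natCast {i : ℕ} (hi : i < M + N) : utilde M N u i = u i := by
  simp [utilde, Int.emod_eq_of_lt (Int.natCast_nonneg i) (by omega : (i : ℤ) < M + N)]

theorem utilde_comm : utilde M N u = utilde N M u := by
  funext i; simp only [utilde, add_comm]

theorem utilde_periodic_of_shift (hM : ∀ i < M, u (i + N) = u i)
    (hN : ∀ j < N, u (j + M) = u j) :
    Periodic (utilde M N u) N := by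
  rcases Nat.eq_zero_or_pos N with rfl | hNpos
  · simp
  intro i
  have hC : (0 : ℤ) < M + N := by omega
  obtain ⟨r, q, hr, rfl⟩ :
      ∃ (r : ℕ) (q : ℤ), r < M + N ∧ i = r + q • (M + N : ℕ) := by
    have hnonneg := Int.emod_nonneg i hC.ne'
    have hlt := Int.emod_lt_of_pos i hC
    have hdecomp := Int.emod_add_mul_ediv i (M + N)
    refine ⟨(i % (M + N)).toNat, i / (M + N), by omega, ?_⟩
    rw [smul_eq_mul, Int.toNat_of_nonneg hnonneg]
    push_cast
    linarith
  rw [add_right_comm, utilde_periodic.zsmul q, utilde_periodic.zsmul q, utilde_natCast hr]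
  rcases lt_or_ge r M with hrM | hMr
  · rw [← Nat.cast_add, utilde_natCast (by omega), hM r hrM]
  · obtain ⟨j, rfl⟩ := Nat.exists_eq_add_of_le' hMr
    have hj : ((j + M : ℕ) : ℤ) + N = j + (M + N : ℕ) := by push_cast; ring
    rw [hj, utilde_periodic, utilde_natCast (by omega), hN j (by omega)]

end utilde

theorem stmt10_general (M N : ℕ) (hM : 0 < M) (u : ℕ → ℕ)
    (hbin : ∀ i < M + N, u i ≤ 1) (hadm : Admissible M N u)
    (hlam : ∑ i ∈ Finset.range M, ((u (i + N) : ℤ) - (u i : ℤ)) = 0) :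
    (∀ i : ℤ, utilde M N u (i + M) = utilde M N u i) ∧
    (∀ i : ℤ, utilde M N u (i + N) = utilde M N u i) ∧
    ∃ p : ℕ, 0 < p ∧ p ∣ Nat.gcd M N ∧
      ∀ i : ℤ, utilde M N u (i + p) = utilde M N u i := by
  obtain ⟨Δ, ⟨hΔM, hΔN, -⟩, hind⟩ := hadm
  have hlam' : ∑ i ∈ range N, ((u (i + M) : ℤ) - u i) = 0 :=
    (sum_range_shift_sub_comm (fun i => (u i : ℤ)) M N).symm.trans hlam
  have hshiftN := apply_add_eq_of_indicator_of_sum_sub_eq_zero hΔN hbin hind le_rfl hlam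
  have hshiftM := apply_add_eq_of_indicator_of_sum_sub_eq_zero hΔM hbin hind
    (add_comm N M).le hlam'
  have hperN : Periodic (utilde M N u) N := utilde_periodic_of_shift hshiftN hshiftM
  have hperM : Periodic (utilde M N u) M :=
    utilde_comm ▸ utilde_periodic_of_shift hshiftM hshiftN
  exact ⟨hperM, hperN, Nat.gcd M N, Nat.gcd_pos_of_pos_left N hM, dvd_rfl,
    hperM.natCast_gcd hperN⟩

/-- If `u` is admissible with `λ(u) = 0`, then the periodic extension `ũ` is both
`M`-periodic and `N`-periodic, and hence `p`-periodic for some `p ∣ gcd(M,N)`. -/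
theorem stmt10 (M N : ℕ) (hM : 0 < M) (hN : 0 < N) (u : ℕ → ℕ)
    (hbin : ∀ i < M + N, u i ≤ 1) (hadm : Admissible M N u)
    (hlam : ∑ i ∈ Finset.range M, ((u (i + N) : ℤ) - (u i : ℤ)) = 0) :
    (∀ i : ℤ, utilde M N u (i + M) = utilde M N u i) ∧
    (∀ i : ℤ, utilde M N u (i + N) = utilde M N u i) ∧
    ∃ p : ℕ, 0 < p ∧ p ∣ Nat.gcd M N ∧
      ∀ i : ℤ, utilde M N u (i + p) = utilde M N u i :=
  stmt10_general M N hM u hbin hadm hlam
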